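/- arXiv:1609.05987 — 2 statements merged into one kernel-verified Lean document; each statement's English description precedes it below -/
import Mathlib

section
/- If two K-partite pure-state coefficient tensors φ, ψ : (Π i : Fin K, Fin (n i)) → ℂ (K ≥ 2, all n i ≥ 1) are SLOCC equivalent, then their coefficient matrices have equal rank: rank M(φ) = rank M(ψ). -/
/-- The coefficient matrix of a `K`-partite pure-state coefficient tensor `ψ`,
with rows indexed by the tuples of the first `t` local indices and columns
indexed by the tuples of the remaining local indices. -/
def coeffMatrix {K : ℕ} {n : Fin K → ℕ} (t : ℕ) (ψ : (∀ i, Fin (n i)) → ℂ) :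
    Matrix (∀ i : {i : Fin K // (i : ℕ) < t}, Fin (n i))
           (∀ i : {i : Fin K // ¬ (i : ℕ) < t}, Fin (n i)) ℂ :=
  Matrix.of fun r c => ψ fun i => if h : (i : ℕ) < t then r ⟨i, h⟩ else c ⟨i, h⟩

/-!
The SLOCC operator `x ↦ ∑ y, (∏ i, C i (x i) (y i)) * ψ y` is the multi-Kronecker product
`⨂ᵢ C i` acting on `ψ`. Splitting the parties into the row block and the column block,
`⨂ᵢ C i` becomes `A ⊗ B` with `A`, `B` the Kronecker products over the two blocks, so
`M(φ) = A * M(ψ) * Bᵀ`. Both `A` and `B` are invertible, hence the ranks agree.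
-/

open Matrix

namespace Matrix

variable {ι R : Type*} [Fintype ι] {α β γ : ι → Type*}

section CommSemiring

variable [CommSemiring R]

def piKronecker (A : ∀ i, Matrix (α i) (β i) R) : Matrix (∀ i, α i) (∀ i, β i) R :=
  of fun x y => ∏ i, A i (x i) (y i)

theorem piKronecker_apply (A : ∀ i, Matrix (α i) (β i) R) (x : ∀ i, α i) (y : ∀ i, β i) :
    piKronecker A x y = ∏ i, A i (x i) (y i) :=
  rfl

theorem piKronecker_mul [DecidableEq ι] [∀ i, Fintype (β i)]
    (A : ∀ i, Matrix (α i) (β i) R) (B : ∀ i, Matrix (β i) (γ i) R) :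
    piKronecker A * piKronecker B = piKronecker fun i => A i * B i := by
  ext x z
  simp only [piKronecker_apply, mul_apply, ← Finset.prod_mul_distrib]
  rw [Finset.prod_univ_sum, Fintype.piFinset_univ]

theorem piKronecker_one [∀ i, DecidableEq (α i)] :
    piKronecker (fun i => (1 : Matrix (α i) (α i) R)) = 1 := by
  ext x y
  simp only [piKronecker_apply, one_apply, Finset.prod_boole, Finset.mem_univ, forall_const,
    funext_iff]

def piKroneckerHom [DecidableEq ι] [∀ i, Fintype (α i)] [∀ i, DecidableEq (α i)] :
    (∀ i, Matrix (α i) (α i) R) →* Matrix (∀ i, α i) (∀ i, α i) R where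
  toFun := piKronecker
  map_one' := piKronecker_one
  map_mul' A B := (piKronecker_mul A B).symm

theorem isUnit_piKronecker [DecidableEq ι] [∀ i, Fintype (α i)] [∀ i, DecidableEq (α i)]
    {A : ∀ i, Matrix (α i) (α i) R} (hA : ∀ i, IsUnit (A i)) : IsUnit (piKronecker A) :=
  (Pi.isUnit_iff.mpr hA).map piKroneckerHom

theorem piKronecker_piEquivPiSubtypeProd_symm (p : ι → Prop) [DecidablePred p]
    (A : ∀ i, Matrix (α i) (β i) R) (r : ∀ i : {i // p i}, α i) (c : ∀ i : {i // ¬ p i}, α i)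
    (r' : ∀ i : {i // p i}, β i) (c' : ∀ i : {i // ¬ p i}, β i) :
    piKronecker A ((Equiv.piEquivPiSubtypeProd p α).symm (r, c))
        ((Equiv.piEquivPiSubtypeProd p β).symm (r', c')) =
      piKronecker (fun i : {i // p i} => A i) r r' *
        piKronecker (fun i : {i // ¬ p i} => A i) c c' := by
  rw [piKronecker_apply, ← Fintype.prod_subtype_mul_prod_subtype p]
  congr 1 <;> refine Finset.prod_congr rfl fun ⟨i, hi⟩ _ => ?_ <;>
    simp [Equiv.piEquivPiSubtypeProd_symm_apply, hi]

end CommSemiring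

end Matrix

section Unfolding

variable {ι R : Type*} [Fintype ι] {α β : ι → Type*} (p : ι → Prop) [DecidablePred p]

def unfolding (ψ : (∀ i, α i) → R) : Matrix (∀ i : {i // p i}, α i) (∀ i : {i // ¬ p i}, α i) R :=
  of fun r c => ψ ((Equiv.piEquivPiSubtypeProd p α).symm (r, c))

theorem unfolding_piKronecker_mulVec [CommSemiring R] [DecidableEq ι] [∀ i, Fintype (β i)]
    (A : ∀ i, Matrix (α i) (β i) R) (ψ : (∀ i, β i) → R) :
    unfolding p (piKronecker A *ᵥ ψ) =
      piKronecker (fun i : {i // p i} => A i) * unfolding p ψ *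
        (piKronecker fun i : {i // ¬ p i} => A i)ᵀ := by
  ext r c
  simp only [unfolding, of_apply, mulVec, dotProduct, mul_apply, transpose_apply, Finset.sum_mul]
  rw [← (Equiv.piEquivPiSubtypeProd p β).symm.sum_comp, Fintype.sum_prod_type, Finset.sum_comm]
  refine Finset.sum_congr rfl fun r' _ => Finset.sum_congr rfl fun c' _ => ?_
  rw [piKronecker_piEquivPiSubtypeProd_symm]
  ring

theorem rank_unfolding_piKronecker_mulVec [CommRing R] [DecidableEq ι] [∀ i, Fintype (α i)]
    [∀ i, DecidableEq (α i)] {A : ∀ i, Matrix (α i) (α i) R} (hA : ∀ i, IsUnit (A i))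
    (ψ : (∀ i, α i) → R) :
    (unfolding p (piKronecker A *ᵥ ψ)).rank = (unfolding p ψ).rank := by
  have hdet (q : ι → Prop) [DecidablePred q] : IsUnit (piKronecker fun i : {i // q i} => A i).det :=
    (isUnit_iff_isUnit_det _).mp (isUnit_piKronecker fun i => hA i)
  rw [unfolding_piKronecker_mulVec,
    rank_mul_eq_left_of_isUnit_det _ _ (by rw [det_transpose]; exact hdet _),
    rank_mul_eq_right_of_isUnit_det _ _ (hdet p)]

end Unfolding

theorem coeffMatrix_rank_eq_of_slocc_general (K : ℕ) (n : Fin K → ℕ)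
    (φ ψ : (∀ i, Fin (n i)) → ℂ)
    (hslocc : ∃ C : ∀ i, Matrix (Fin (n i)) (Fin (n i)) ℂ,
      (∀ i, IsUnit (C i)) ∧ ∀ x, φ x = ∑ y, (∏ i, C i (x i) (y i)) * ψ y) :
    (coeffMatrix (K / 2) φ).rank = (coeffMatrix (K / 2) ψ).rank := by
  obtain ⟨C, hC, hφ⟩ := hslocc
  obtain rfl : φ = piKronecker C *ᵥ ψ := funext hφ
  -- `coeffMatrix t` is `unfolding (· < t)` by definition.
  exact rank_unfolding_piKronecker_mulVec (fun i : Fin K => (i : ℕ) < K / 2) hC ψ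

/-- SLOCC-equivalent `K`-partite pure-state coefficient tensors have coefficient
matrices of equal rank. -/
theorem coeffMatrix_rank_eq_of_slocc (K : ℕ) (hK : 2 ≤ K) (n : Fin K → ℕ)
    (hn : ∀ i, 1 ≤ n i) (φ ψ : (∀ i, Fin (n i)) → ℂ)
    (hslocc : ∃ C : ∀ i, Matrix (Fin (n i)) (Fin (n i)) ℂ,
      (∀ i, IsUnit (C i)) ∧ ∀ x, φ x = ∑ y, (∏ i, C i (x i) (y i)) * ψ y) :
    (coeffMatrix (K / 2) φ).rank = (coeffMatrix (K / 2) ψ).rank :=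
  coeffMatrix_rank_eq_of_slocc_general K n φ ψ hslocc
end

section
/- Let K ≥ 1, n : Fin K → ℕ with all n i ≥ 1, and let ρ₁, ρ₂ be Hermitian positive-semidefinite matrices indexed by (Π i : Fin K, Fin (n i))² over ℂ. Suppose there exist unitary matrices X, Y indexed by (Π i, Fin (n i))² and an invertible diagonal matrix B with real diagonal entries such that ρ₁ = X B Y† ρ₂ Y B X†, and for every i₀ : Fin K the realignment of XBY† with respect to the bipartition {i₀} versus the remaining parties has rank 1. Then ρ₁ and ρ₂ are SLOCC equivalent. -/
open Matrix ComplexOrder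

/-- Extend a local index `a` at position `i₀` and indices `f` on the remaining
positions to a full multi-index. -/
def extendIdx {ι : Type*} [DecidableEq ι] {m : ι → ℕ} (i₀ : ι) (a : Fin (m i₀))
    (f : ∀ j : {j : ι // j ≠ i₀}, Fin (m j)) : ∀ i, Fin (m i) :=
  fun i => if h : i = i₀ then cast (congrArg (fun k => Fin (m k)) h).symm a else f ⟨i, h⟩

/-- The realignment of a matrix `A` indexed by multi-indices, with respect to the
bipartition `{i₀}` versus the remaining parties. -/
def realignAt {ι : Type*} [DecidableEq ι] {m : ι → ℕ}
    (A : Matrix (∀ i, Fin (m i)) (∀ i, Fin (m i)) ℂ) (i₀ : ι) :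
    Matrix (Fin (m i₀) × Fin (m i₀))
      ((∀ j : {j : ι // j ≠ i₀}, Fin (m j)) × (∀ j : {j : ι // j ≠ i₀}, Fin (m j))) ℂ :=
  Matrix.of fun p q => A (extendIdx i₀ p.1 q.1) (extendIdx i₀ p.2 q.2)

/-! Put `T = XBY†`. It is invertible and `Tᴴ = YBX†`, so `ρ₁ = T ρ₂ Tᴴ`, and it remains to show
that `T` is a tensor product of invertible local matrices. A rank-one
realignment at party `i` has vanishing `2 × 2` minors, which says that exchanging the `i`-th
indices between two entries of `T` preserves their product. Iterating this exchange over all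
parties expresses each entry `T x y` through the one-party slices `p, q ↦ T (x₀[i ↦ p]) (y₀[i ↦ q])`
at a nonzero entry `T x₀ y₀`, so `T = ⊗ᵢ aᵢ`. Each `aᵢ` is invertible, since a kernel vector of
`aᵢ` tensored with basis vectors at the other parties would be a kernel vector of `T`. -/

open Function

theorem Matrix.mul_eq_mul_of_rank_le_one {m n R : Type*} [Fintype n] [CommRing R] [IsDomain R]
    {A : Matrix m n R} (hA : A.rank ≤ 1) (p p' : m) (q q' : n) :
    A p q * A p' q' = A p q' * A p' q := by
  by_contra h
  have hdet : (A.submatrix ![p, p'] ![q, q']).det ≠ 0 := by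
    rwa [det_fin_two, sub_ne_zero]
  have := rank_submatrix_le A ![p, p'] ![q, q']
  rw [rank_of_det_ne_zero hdet, Fintype.card_fin] at this
  omega

section TensorProduct

variable {ι : Type*} [Fintype ι] {R : Type*}

def Matrix.piKronecker_s11 {α β : ι → Type*} [CommMonoid R] (a : ∀ i, Matrix (α i) (β i) R) :
    Matrix (∀ i, α i) (∀ i, β i) R :=
  of fun x y => ∏ i, a i (x i) (y i)

variable [DecidableEq ι]

theorem Matrix.piKronecker_mulVec {α β : ι → Type*} [∀ i, Fintype (β i)] [CommSemiring R]
    (a : ∀ i, Matrix (α i) (β i) R) (u : ∀ i, β i → R) :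
    piKronecker_s11 a *ᵥ (fun y : ∀ i, β i => ∏ i, u i (y i)) = fun x => ∏ i, (a i *ᵥ u i) (x i) := by
  funext x
  simp only [mulVec, dotProduct, piKronecker_s11, of_apply, ← Finset.prod_mul_distrib]
  exact (Fintype.prod_sum fun i j => a i (x i) j * u i j).symm

theorem Matrix.isUnit_of_isUnit_piKronecker {α : ι → Type*} [∀ i, Fintype (α i)]
    [∀ i, DecidableEq (α i)] [∀ i, Nonempty (α i)] [Field R]
    {a : ∀ i, Matrix (α i) (α i) R} (h : IsUnit (piKronecker_s11 a)) (i : ι) : IsUnit (a i) := by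
  rw [isUnit_iff_isUnit_det, isUnit_iff_ne_zero]
  intro hdet
  obtain ⟨w, hw, haw⟩ := exists_mulVec_eq_zero_iff.mpr hdet
  obtain ⟨t, ht⟩ := Function.ne_iff.mp hw
  let u : ∀ j, α j → R := update (fun j => Pi.single (Classical.arbitrary (α j)) 1) i w
  have hu : (fun y : ∀ j, α j => ∏ j, u j (y j)) ≠ 0 := by
    refine Function.ne_iff.mpr ⟨update (fun j => Classical.arbitrary (α j)) i t, ?_⟩
    refine Finset.prod_ne_zero_iff.mpr fun j _ => ?_
    by_cases hj : j = i
    · subst hj; simpa [u] using ht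
    · simp [u, hj]
  refine hu (mulVec_injective_of_isUnit h ?_)
  rw [piKronecker_mulVec, mulVec_zero]
  funext x
  exact Finset.prod_eq_zero (Finset.mem_univ i) (by simp [u, haw])

end TensorProduct

section Factorization

variable {ι : Type*} [DecidableEq ι] {α β : ι → Type*} {R : Type*}

def PartyExchange [Mul R] (T : Matrix (∀ i, α i) (∀ i, β i) R) : Prop :=
  ∀ (i : ι) (x x' : ∀ i, α i) (y y' : ∀ i, β i),
    T x y * T x' y' =
      T (update x' i (x i)) (update y' i (y i)) * T (update x i (x' i)) (update y i (y' i))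

namespace PartyExchange

theorem mul_pow_card_piecewise [CommMonoid R] {T : Matrix (∀ i, α i) (∀ i, β i) R}
    (hT : PartyExchange T) (x₀ x : ∀ i, α i) (y₀ y : ∀ i, β i) (s : Finset ι) :
    T (s.piecewise x x₀) (s.piecewise y y₀) * T x₀ y₀ ^ s.card =
      T x₀ y₀ * ∏ i ∈ s, T (update x₀ i (x i)) (update y₀ i (y i)) := by
  induction s using Finset.induction_on with
  | empty => simp
  | insert i s hi ih =>
    have h := hT i (s.piecewise x x₀) (update x₀ i (x i)) (s.piecewise y y₀) (update y₀ i (y i))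
    rw [update_self, update_self, update_idem, update_idem, s.piecewise_eq_of_notMem _ _ hi,
      s.piecewise_eq_of_notMem _ _ hi, update_eq_self, update_eq_self] at h
    rw [Finset.piecewise_insert, Finset.piecewise_insert, Finset.card_insert_of_notMem hi,
      Finset.prod_insert hi, pow_succ]
    calc _ = T (s.piecewise x x₀) (s.piecewise y y₀) * T x₀ y₀ ^ s.card *
          T (update x₀ i (x i)) (update y₀ i (y i)) := by
          rw [mul_right_comm, h]; ac_rfl
      _ = _ := by rw [ih]; ac_rfl

theorem exists_eq_piKronecker [Fintype ι] [Field R] [Nonempty ι]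
    {T : Matrix (∀ i, α i) (∀ i, β i) R} (hT : PartyExchange T) {x₀ : ∀ i, α i}
    {y₀ : ∀ i, β i} (hc : T x₀ y₀ ≠ 0) :
    ∃ a : ∀ i, Matrix (α i) (β i) R, T = piKronecker_s11 a := by
  obtain ⟨i₁⟩ := ‹Nonempty ι›
  -- `T x y = c⁻¹ ^ (card ι - 1) * ∏ᵢ sliceᵢ` with `c = T x₀ y₀`; party `i₁` carries no `c⁻¹`
  refine ⟨fun i => of fun p q =>
    (Pi.mulSingle i₁ (T x₀ y₀) : ι → R) i * (T x₀ y₀)⁻¹ * T (update x₀ i p) (update y₀ i q), ?_⟩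
  ext x y
  have h := hT.mul_pow_card_piecewise x₀ x y₀ y Finset.univ
  rw [Finset.piecewise_univ, Finset.piecewise_univ] at h
  simp only [piKronecker_s11, of_apply, Finset.prod_mul_distrib, Finset.prod_pi_mulSingle',
    Finset.mem_univ, if_true, Finset.prod_const]
  rw [mul_assoc, mul_left_comm, ← h, mul_left_comm, ← mul_pow, inv_mul_cancel₀ hc, one_pow,
    mul_one]

end PartyExchange

end Factorization

section Realignment

variable {ι : Type*} [DecidableEq ι] {m : ι → ℕ}

theorem extendIdx_restrict (i₀ : ι) (a : Fin (m i₀)) (x : ∀ i, Fin (m i)) :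
    extendIdx i₀ a (fun j => x j.1) = update x i₀ a := by
  funext j
  by_cases h : j = i₀
  · subst h; simp [extendIdx]
  · simp [extendIdx, h]

theorem partyExchange_of_rank_realignAt_le_one [Fintype ι]
    {A : Matrix (∀ i, Fin (m i)) (∀ i, Fin (m i)) ℂ} (hA : ∀ i, (realignAt A i).rank ≤ 1) :
    PartyExchange A := by
  intro i x x' y y'
  have h := mul_eq_mul_of_rank_le_one (hA i) (x i, y i) (x' i, y' i)
    (fun j => x j.1, fun j => y j.1) (fun j => x' j.1, fun j => y' j.1)
  simpa only [realignAt, of_apply, extendIdx_restrict, update_eq_self] using h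

end Realignment

theorem slocc_mixed_sufficient_general (K : ℕ) (hK : 1 ≤ K) (n : Fin K → ℕ)
    (hn : ∀ i, 1 ≤ n i)
    (ρ₁ ρ₂ : Matrix (∀ i, Fin (n i)) (∀ i, Fin (n i)) ℂ)
    (X Y : Matrix (∀ i, Fin (n i)) (∀ i, Fin (n i)) ℂ)
    (b : (∀ i, Fin (n i)) → ℝ)
    (hX : X ∈ Matrix.unitaryGroup (∀ i, Fin (n i)) ℂ)
    (hY : Y ∈ Matrix.unitaryGroup (∀ i, Fin (n i)) ℂ)
    (hb : ∀ x, b x ≠ 0)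
    (hconj : ρ₁ = X * Matrix.diagonal (fun x => (b x : ℂ)) * Yᴴ * ρ₂ *
      Y * Matrix.diagonal (fun x => (b x : ℂ)) * Xᴴ)
    (hrank : ∀ i₀ : Fin K,
      (realignAt (X * Matrix.diagonal (fun x => (b x : ℂ)) * Yᴴ) i₀).rank = 1) :
    ∃ a : ∀ i, Matrix (Fin (n i)) (Fin (n i)) ℂ,
      (∀ i, IsUnit (a i)) ∧
        ρ₁ = (Matrix.of fun x y => ∏ i, a i (x i) (y i)) * ρ₂ *
          (Matrix.of fun x y => ∏ i, a i (x i) (y i))ᴴ := by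
  have : Nonempty (Fin K) := ⟨⟨0, hK⟩⟩
  have : ∀ i, Nonempty (Fin (n i)) := fun i => ⟨⟨0, hn i⟩⟩
  set T := X * diagonal (fun x => (b x : ℂ)) * Yᴴ
  have hB : IsUnit (diagonal fun x => (b x : ℂ)) :=
    isUnit_diagonal.mpr (Pi.isUnit_iff.mpr fun x => (Complex.ofReal_ne_zero.mpr (hb x)).isUnit)
  have hT : IsUnit T := ((Unitary.isUnit_coe (U := ⟨X, hX⟩)).mul hB).mul
    (Unitary.isUnit_coe (U := ⟨star Y, Unitary.star_mem hY⟩))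
  have hρ : ρ₁ = T * ρ₂ * Tᴴ := by
    simp only [hconj, T, conjTranspose_mul, conjTranspose_conjTranspose, diagonal_conjTranspose,
      Pi.star_def, Complex.star_def, Complex.conj_ofReal, mul_assoc]
  obtain ⟨x₀, y₀, hc⟩ : ∃ x y, T x y ≠ 0 := by
    by_contra! h
    exact hT.ne_zero (Matrix.ext h)
  obtain ⟨a, hTa⟩ :=
    (partyExchange_of_rank_realignAt_le_one fun i => (hrank i).le).exists_eq_piKronecker hc
  rw [hTa] at hT hρ
  exact ⟨a, isUnit_of_isUnit_piKronecker hT, hρ⟩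

/-- If `ρ₁ = XBY† ρ₂ YBX†` for unitaries `X, Y` and an invertible real diagonal
`B`, and every single-party realignment of `XBY†` has rank 1, then `ρ₁` and
`ρ₂` are SLOCC equivalent. -/
theorem slocc_mixed_sufficient (K : ℕ) (hK : 1 ≤ K) (n : Fin K → ℕ)
    (hn : ∀ i, 1 ≤ n i)
    (ρ₁ ρ₂ : Matrix (∀ i, Fin (n i)) (∀ i, Fin (n i)) ℂ)
    (hρ₁ : ρ₁.PosSemidef) (hρ₂ : ρ₂.PosSemidef)
    (X Y : Matrix (∀ i, Fin (n i)) (∀ i, Fin (n i)) ℂ)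
    (b : (∀ i, Fin (n i)) → ℝ)
    (hX : X ∈ Matrix.unitaryGroup (∀ i, Fin (n i)) ℂ)
    (hY : Y ∈ Matrix.unitaryGroup (∀ i, Fin (n i)) ℂ)
    (hb : ∀ x, b x ≠ 0)
    (hconj : ρ₁ = X * Matrix.diagonal (fun x => (b x : ℂ)) * Yᴴ * ρ₂ *
      Y * Matrix.diagonal (fun x => (b x : ℂ)) * Xᴴ)
    (hrank : ∀ i₀ : Fin K,
      (realignAt (X * Matrix.diagonal (fun x => (b x : ℂ)) * Yᴴ) i₀).rank = 1) :
    ∃ a : ∀ i, Matrix (Fin (n i)) (Fin (n i)) ℂ,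
      (∀ i, IsUnit (a i)) ∧
        ρ₁ = (Matrix.of fun x y => ∏ i, a i (x i) (y i)) * ρ₂ *
          (Matrix.of fun x y => ∏ i, a i (x i) (y i))ᴴ :=
  slocc_mixed_sufficient_general K hK n hn ρ₁ ρ₂ X Y b hX hY hb hconj hrank
end
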